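/- arXiv:2509.06104 — 2 statements merged into one kernel-verified Lean document; each statement's English description precedes it below -/
import Mathlib

section
/- Let M be as above and λ an eigenvalue of M with λ ≠ 1. Then the row vector u with entries u_i = (λ^(i+1) - 2λ^i + 1)/(λ - 1) for 0 ≤ i ≤ 2d satisfies u·M = λ·u. -/
/-!
Column `j < 2d` of `M` has its nonzero entries (both `1`) in rows `0` and `j + 1`, and the last
column has `1` in row `0` and `2` in row `2d`. So `u M = λ u` amounts to `u₀ + u_{j+1} = λ u_j`,
a polynomial identity in `λ` after clearing the common denominator `λ - 1`, together with
`u₀ + 2 u_{2d} = λ u_{2d}`, whose numerators differ by exactly `λ^{2d} (λ - 2)² - 1`.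
-/

open Matrix

/-- The incidence matrix of the morphism φ. -/
def Mmat (d : ℕ) : Matrix (Fin (2 * d + 1)) (Fin (2 * d + 1)) ℂ :=
  Matrix.of fun i j =>
    if (i : ℕ) = 0 then 1
    else if (i : ℕ) = (j : ℕ) + 1 then 1
    else if (i : ℕ) = 2 * d ∧ (j : ℕ) = 2 * d then 2
    else 0

section Columns

variable {d : ℕ} (u : Fin (2 * d + 1) → ℂ)

theorem vecMul_Mmat_castSucc (j : Fin (2 * d)) :
    (u ᵥ* Mmat d) j.castSucc = u 0 + u j.succ := by
  rw [vecMul_apply_eq_sum, Finset.sum_eq_add_of_mem 0 j.succ (Finset.mem_univ _)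
    (Finset.mem_univ _) (Fin.succ_ne_zero j).symm]
  · simp [Mmat]
  · intro i _ ⟨hi0, hij⟩
    have hij : (i : ℕ) ≠ j + 1 := fun h => hij (Fin.ext h)
    simp [Mmat, hi0, hij, j.isLt.ne]

theorem vecMul_Mmat_last (hd : d ≠ 0) :
    (u ᵥ* Mmat d) (Fin.last _) = u 0 + 2 * u (Fin.last _) := by
  have h0last : (0 : Fin (2 * d + 1)) ≠ Fin.last _ := Fin.val_ne_iff.mp (by simp [hd])
  rw [vecMul_apply_eq_sum, Finset.sum_eq_add_of_mem 0 (Fin.last _) (Finset.mem_univ _)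
    (Finset.mem_univ _) h0last]
  · simp [Mmat, hd, mul_comm]
  · intro i _ ⟨hi0, hilast⟩
    have hilast : (i : ℕ) ≠ 2 * d := fun h => hilast (Fin.ext h)
    simp [Mmat, hi0, hilast, i.isLt.ne]

end Columns

section EigenCoeff

variable {K : Type*} [Field K]

def eigenCoeff (lam : K) (i : ℕ) : K := (lam ^ (i + 1) - 2 * lam ^ i + 1) / (lam - 1)

theorem eigenCoeff_zero_add_succ (lam : K) (i : ℕ) :
    eigenCoeff lam 0 + eigenCoeff lam (i + 1) = lam * eigenCoeff lam i := by
  rw [eigenCoeff, eigenCoeff, eigenCoeff, ← add_div, mul_div_assoc']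
  congr 1
  ring

theorem eigenCoeff_zero_add_two_mul {lam : K} {n : ℕ} (hroot : lam ^ n * (lam - 2) ^ 2 = 1) :
    eigenCoeff lam 0 + 2 * eigenCoeff lam n = lam * eigenCoeff lam n := by
  rw [eigenCoeff, eigenCoeff, mul_div_assoc', mul_div_assoc', ← add_div]
  congr 1
  linear_combination -hroot

end EigenCoeff

theorem stmt_6_general (d : ℕ) (hd : 1 ≤ d) (lam : ℂ)
    (hroot : lam ^ (2 * d) * (lam - 2) ^ 2 = 1)
    (u : Fin (2 * d + 1) → ℂ)
    (hu : ∀ i : Fin (2 * d + 1),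
      u i = (lam ^ ((i : ℕ) + 1) - 2 * lam ^ (i : ℕ) + 1) / (lam - 1)) :
    Matrix.vecMul u (Mmat d) = lam • u := by
  obtain rfl : u = fun i : Fin (2 * d + 1) => eigenCoeff lam i := funext hu
  funext j
  rw [Pi.smul_apply, smul_eq_mul]
  obtain ⟨j, rfl⟩ | rfl := Fin.eq_castSucc_or_eq_last j
  · rw [vecMul_Mmat_castSucc]
    exact eigenCoeff_zero_add_succ lam j
  · rw [vecMul_Mmat_last _ (Nat.one_le_iff_ne_zero.mp hd)]
    exact eigenCoeff_zero_add_two_mul hroot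

theorem stmt_6 (d : ℕ) (hd : 1 ≤ d) (lam : ℂ)
    (hroot : lam ^ (2 * d) * (lam - 2) ^ 2 = 1) (hne : lam ≠ 1)
    (u : Fin (2 * d + 1) → ℂ)
    (hu : ∀ i : Fin (2 * d + 1),
      u i = (lam ^ ((i : ℕ) + 1) - 2 * lam ^ (i : ℕ) + 1) / (lam - 1)) :
    Matrix.vecMul u (Mmat d) = lam • u :=
  stmt_6_general d hd lam hroot u hu
end

section
/- Let h = (1,...,1,2^0,...,2^d) ∈ R^(2d+1) (d ones then powers of 2) and M as above. Then for every n ∈ ℕ, h·M^n·e_{2d} = ∑_{λ ∈ S_Λ} c_λ·λ^n, where S_Λ is the set of (complex) roots of t^(d+1) - 2t^d - 1 and c_λ = λ^(d+1)/((d+1)λ - 2d). -/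
/-!
Write `u n = h ⬝ᵥ (M ^ n *ᵥ e_{2d})`. For `k ≤ d + 1` the row vectors `h ᵥ* M ^ k` have an
explicit closed form, from which `h ᵥ* M ^ (d + 1) = 2 • (h ᵥ* M ^ d) + h`; so `u` solves the
linear recurrence with characteristic polynomial `q = X ^ (d + 1) - 2 X ^ d - 1`. So does
`T j = ∑ λ, λ ^ j / q'(λ)`, the sum running over the roots of `q`; as `q` is separable, the
coefficient of `X ^ d` in Lagrange interpolation at these roots gives `T j = δ_{j d}` for
`j ≤ d`. Running both recurrences forward, `u n = T (2 d + n)` for `n ≤ d`, hence for all `n`,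
and `λ q'(λ) = λ ^ d ((d + 1) λ - 2 d)` turns `T (2 d + n)` into the stated sum.
-/

open Matrix

/-- The last standard basis vector `e_{2d}`. -/
def eLast (d : ℕ) : Fin (2 * d + 1) → ℂ := Pi.single (Fin.last (2 * d)) 1

open Polynomial Finset

theorem sum_pow_div_eval_derivative {F : Type*} [Field F] [DecidableEq F] {p : F[X]} {n : ℕ}
    (hp : p.Monic) (hdeg : p.natDegree = n + 1) (hsep : p.Separable) (hsplit : p.Splits)
    {j : ℕ} (hj : j ≤ n) :
    ∑ x ∈ p.roots.toFinset, x ^ j / (derivative p).eval x = if n = j then 1 else 0 := by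
  set s := p.roots.toFinset
  have hval : s.val = p.roots := (nodup_roots hsep).dedup ▸ Multiset.toFinset_val _
  have hnodal : Lagrange.nodal s id = p := by
    rw [Lagrange.nodal, Finset.prod_eq_multiset_prod, hval]
    exact prod_multiset_X_sub_C_of_monic_of_roots_card_eq hp hsplit.natDegree_eq_card_roots.symm
  have hcard : #s = n + 1 := by
    rw [Finset.card_def, hval, ← hsplit.natDegree_eq_card_roots, hdeg]
  have hcoeff := Lagrange.coeff_eq_sum (v := id) (Set.injOn_id (s : Set F)) (P := X ^ j)
    (by rw [degree_X_pow, hcard]; exact_mod_cast Nat.lt_succ_of_le hj)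
  rw [coeff_X_pow, hcard, Nat.add_sub_cancel] at hcoeff
  rw [hcoeff, ← hnodal]
  refine sum_congr rfl fun x hx => ?_
  have hderiv := Lagrange.eval_nodal_derivative_eval_node_eq (v := id) hx
  rw [id, Lagrange.eval_nodal] at hderiv
  simp [hderiv]

def twoTermRecurrence {R : Type*} [CommSemiring R] (d : ℕ) (a b : R) : LinearRecurrence R :=
  ⟨d + 1, Pi.single (Fin.last d) a + Pi.single 0 b⟩

theorem twoTermRecurrence_isSolution_iff {R : Type*} [CommSemiring R] {d : ℕ} {a b : R}
    {u : ℕ → R} :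
    (twoTermRecurrence d a b).IsSolution u ↔ ∀ n, u (n + (d + 1)) = a * u (n + d) + b * u n := by
  change (∀ n, u (n + (d + 1)) = ∑ i : Fin (d + 1),
    (Pi.single (Fin.last d) a + Pi.single 0 b : Fin (d + 1) → R) i * u (n + i)) ↔ _
  simp [add_mul, sum_add_distrib, Pi.single_apply]

noncomputable def lambdaPoly (d : ℕ) : ℂ[X] := X ^ (d + 1) - C 2 * X ^ d - 1

section lambdaPoly

variable (d : ℕ)

theorem lambdaPoly_eval (x : ℂ) : (lambdaPoly d).eval x = x ^ (d + 1) - 2 * x ^ d - 1 := by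
  simp [lambdaPoly]

theorem lambdaPoly_monic : (lambdaPoly d).Monic := by
  unfold lambdaPoly; monicity!

theorem lambdaPoly_natDegree : (lambdaPoly d).natDegree = d + 1 := by
  unfold lambdaPoly; compute_degree!

theorem mul_eval_derivative_lambdaPoly (x : ℂ) :
    x * (derivative (lambdaPoly d)).eval x = x ^ d * ((d + 1) * x - 2 * d) := by
  rcases d with _ | d
  · simp [lambdaPoly]
  · simp [lambdaPoly]
    ring

theorem lambdaPoly_separable : (lambdaPoly d).Separable := by
  rw [separable_def, isCoprime_iff_aeval_ne_zero_of_isAlgClosed ℂ ℂ]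
  intro a
  by_contra! ⟨hq, hq'⟩
  simp only [coe_aeval_eq_eval] at hq hq'
  have hroot : a ^ d * (a - 2) = 1 := by
    rw [lambdaPoly_eval] at hq; linear_combination hq
  have hcrit : ((d : ℂ) + 1) * a = 2 * d := by
    have h := mul_eval_derivative_lambdaPoly d a
    rw [hq', mul_zero, eq_comm, mul_eq_zero, sub_eq_zero] at h
    refine h.resolve_left fun ha => ?_
    obtain ⟨rfl, hd⟩ := pow_eq_zero_iff'.mp ha
    simp [zero_pow hd] at hroot
  have hscaled : ((d : ℂ) + 1) ^ (d + 1) = -2 * (2 * d) ^ d := by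
    calc ((d : ℂ) + 1) ^ (d + 1) = ((d + 1) * a) ^ d * ((d + 1) * a - 2 * (d + 1)) := by
          rw [mul_pow]; linear_combination (-((d : ℂ) + 1) ^ (d + 1)) * hroot
      _ = -2 * (2 * d) ^ d := by rw [hcrit]; ring
  have hpos : (0 : ℤ) < (d + 1) ^ (d + 1) + 2 * (2 * d) ^ d := by positivity
  have hzero : ((d : ℤ) + 1) ^ (d + 1) + 2 * (2 * d) ^ d = 0 := by
    exact_mod_cast (by linear_combination hscaled : ((d : ℂ) + 1) ^ (d + 1) + 2 * (2 * d) ^ d = 0)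
  omega

end lambdaPoly

-- with truncated subtraction this is `2 ^ (s - d)` for `s ≤ 2 * d` (so `1` for `s ≤ d`),
-- and `2 ^ (d + t) + t * 2 ^ (t - 1)` at `s = 2 * d + t`
noncomputable def closedForm (d s : ℕ) : ℂ := 2 ^ (s - d) + (s - 2 * d : ℕ) * 2 ^ (s - 2 * d) / 2

section closedForm

variable (d : ℕ)

theorem closedForm_of_le {s : ℕ} (hs : s ≤ 2 * d) : closedForm d s = 2 ^ (s - d) := by
  simp [closedForm, Nat.sub_eq_zero_of_le hs]

theorem closedForm_add_succ (i : ℕ) :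
    closedForm d (i + d + 1) = 2 * closedForm d (i + d) + (2 ^ (i + 1 - d) - 2 ^ (i - d)) := by
  rcases lt_or_ge i d with hi | hi
  · rw [closedForm_of_le d (by omega), closedForm_of_le d (by omega),
      show i + 1 - d = 0 by omega, show i - d = 0 by omega,
      show i + d + 1 - d = (i + d - d) + 1 by omega, pow_succ]
    ring
  · obtain ⟨t, rfl⟩ := Nat.exists_eq_add_of_le hi
    simp only [closedForm, show d + t + d + 1 - d = d + t + 1 by omega,
      show d + t + d - d = d + t by omega, show d + t + d + 1 - 2 * d = t + 1 by omega,
      show d + t + d - 2 * d = t by omega, show d + t + 1 - d = t + 1 by omega,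
      show d + t - d = t by omega]
    push_cast
    ring

end closedForm

noncomputable def rootPowSum (d j : ℕ) : ℂ :=
  ∑ x ∈ (lambdaPoly d).roots.toFinset, x ^ j / (derivative (lambdaPoly d)).eval x

section rootPowSum

variable (d : ℕ)

theorem rootPowSum_of_le {j : ℕ} (hj : j ≤ d) : rootPowSum d j = if d = j then 1 else 0 :=
  sum_pow_div_eval_derivative (lambdaPoly_monic d) (lambdaPoly_natDegree d)
    (lambdaPoly_separable d) (IsAlgClosed.splits _) hj

theorem rootPowSum_add_succ (j : ℕ) :
    rootPowSum d (j + (d + 1)) = 2 * rootPowSum d (j + d) + rootPowSum d j := by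
  rw [rootPowSum, rootPowSum, rootPowSum, mul_sum, ← sum_add_distrib]
  refine sum_congr rfl fun x hx => ?_
  have hroot : x ^ (d + 1) = 2 * x ^ d + 1 := by
    have := (mem_roots (lambdaPoly_monic d).ne_zero).mp (Multiset.mem_toFinset.mp hx)
    rw [IsRoot, lambdaPoly_eval] at this
    linear_combination this
  rw [pow_add x j, pow_add x j, hroot]
  ring

theorem rootPowSum_eq_closedForm {s : ℕ} (hds : d ≤ s) (hs : s ≤ 3 * d) :
    rootPowSum d s = closedForm d s := by
  induction s using Nat.strong_induction_on with
  | _ s ih =>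
    obtain ⟨m, rfl⟩ := Nat.exists_eq_add_of_le hds
    rcases m with _ | m
    · rw [add_zero, rootPowSum_of_le d le_rfl, if_pos rfl, closedForm_of_le d (by omega),
        Nat.sub_self, pow_zero]
    rw [show d + (m + 1) = m + d + 1 by omega, closedForm_add_succ,
      show m + d + 1 = m + (d + 1) by omega, rootPowSum_add_succ,
      ih (m + d) (by omega) (by omega) (by omega)]
    congr 1
    rcases lt_or_ge m d with hm | hm
    · rw [rootPowSum_of_le d hm.le, if_neg hm.ne', Nat.sub_eq_zero_of_le hm,
        Nat.sub_eq_zero_of_le hm.le, sub_self]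
    · rw [ih m (by omega) hm (by omega), closedForm_of_le d (by omega),
        show m + 1 - d = (m - d) + 1 by omega, pow_succ]
      ring

end rootPowSum

-- truncated subtraction makes the first `d` entries equal to `1`
def hVec (d : ℕ) : Fin (2 * d + 1) → ℂ := fun i => 2 ^ ((i : ℕ) - d)

section matrix

variable {d : ℕ}

theorem vecMul_Mmat_apply_of_lt (w : Fin (2 * d + 1) → ℂ) (j : Fin (2 * d + 1))
    (hj : (j : ℕ) < 2 * d) : (w ᵥ* Mmat d) j = w 0 + w ⟨j + 1, by omega⟩ := by
  have hcol : (fun i => Mmat d i j) = Pi.single 0 1 + Pi.single ⟨j + 1, by omega⟩ 1 := by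
    funext i
    simp only [Mmat, of_apply, Pi.add_apply, Pi.single_apply, Fin.ext_iff, Fin.val_zero]
    split_ifs <;> simp_all
  rw [vecMul, hcol, dotProduct_add, dotProduct_single, dotProduct_single, mul_one, mul_one]

theorem vecMul_Mmat_apply_last (hd : 1 ≤ d) (w : Fin (2 * d + 1) → ℂ) :
    (w ᵥ* Mmat d) (Fin.last _) = w 0 + 2 * w (Fin.last _) := by
  have hcol : (fun i => Mmat d i (Fin.last _)) = Pi.single 0 1 + Pi.single (Fin.last _) 2 := by
    funext i
    simp only [Mmat, of_apply, Pi.add_apply, Pi.single_apply, Fin.ext_iff, Fin.val_zero,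
      Fin.val_last, and_true]
    have := i.isLt
    split_ifs <;> simp_all
  rw [vecMul, hcol, dotProduct_add, dotProduct_single, dotProduct_single, mul_one,
    mul_comm (w _)]

theorem hVec_vecMul_Mmat_pow_apply (hd : 1 ≤ d) {k : ℕ} (hk : k ≤ d + 1) (j : Fin (2 * d + 1)) :
    (hVec d ᵥ* Mmat d ^ k) j = 2 ^ k - 2 ^ (j + k - 2 * d) + closedForm d (j + k) := by
  induction k generalizing j with
  | zero =>
    rw [pow_zero, vecMul_one, hVec, add_zero, closedForm_of_le d (by omega),
      Nat.sub_eq_zero_of_le (by omega : (j : ℕ) ≤ 2 * d)]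
    ring
  | succ k ih =>
    have hrow0 : (hVec d ᵥ* Mmat d ^ k) 0 = 2 ^ k := by
      rw [ih (by omega), Fin.val_zero, zero_add, closedForm_of_le d (by omega),
        show k - 2 * d = 0 by omega, show k - d = 0 by omega]
      ring
    rw [pow_succ, ← vecMul_vecMul]
    rcases lt_or_ge (j : ℕ) (2 * d) with hj | hj
    · rw [vecMul_Mmat_apply_of_lt _ j hj, hrow0, ih (by omega),
        show (j : ℕ) + 1 + k = j + (k + 1) by omega, pow_succ]
      ring
    · obtain rfl : j = Fin.last _ := Fin.ext (by simp; omega)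
      have hcf : closedForm d (2 * d + (k + 1)) = 2 * closedForm d (2 * d + k) + 2 ^ k := by
        have := closedForm_add_succ d (d + k)
        rw [show d + k + d + 1 = 2 * d + (k + 1) by omega, show d + k + d = 2 * d + k by omega,
          show d + k + 1 - d = k + 1 by omega, show d + k - d = k by omega, pow_succ] at this
        linear_combination this
      rw [vecMul_Mmat_apply_last hd, hrow0, ih (by omega), Fin.val_last, Nat.add_sub_cancel_left,
        Nat.add_sub_cancel_left, hcf]
      ring

theorem hVec_vecMul_Mmat_pow_succ (hd : 1 ≤ d) :
    hVec d ᵥ* Mmat d ^ (d + 1) = (2 : ℂ) • (hVec d ᵥ* Mmat d ^ d) + hVec d := by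
  funext j
  rw [Pi.add_apply, Pi.smul_apply, smul_eq_mul, hVec_vecMul_Mmat_pow_apply hd le_rfl,
    hVec_vecMul_Mmat_pow_apply hd (by omega), show (j : ℕ) + (d + 1) = j + d + 1 by omega,
    closedForm_add_succ, hVec, show (j : ℕ) + d + 1 - 2 * d = j + 1 - d by omega,
    show (j : ℕ) + d - 2 * d = j - d by omega, pow_succ]
  ring

theorem hVec_dotProduct_Mmat_pow_add_succ (hd : 1 ≤ d) (v : Fin (2 * d + 1) → ℂ) (n : ℕ) :
    hVec d ⬝ᵥ (Mmat d ^ (n + (d + 1)) *ᵥ v) =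
      2 * hVec d ⬝ᵥ (Mmat d ^ (n + d) *ᵥ v) + hVec d ⬝ᵥ (Mmat d ^ n *ᵥ v) := by
  rw [add_comm n, pow_add, ← mulVec_mulVec, dotProduct_mulVec, hVec_vecMul_Mmat_pow_succ hd,
    add_dotProduct, smul_dotProduct, ← dotProduct_mulVec, mulVec_mulVec, ← pow_add, add_comm d n,
    smul_eq_mul]

theorem hVec_dotProduct_Mmat_pow_eLast_of_le (hd : 1 ≤ d) {n : ℕ} (hn : n ≤ d + 1) :
    hVec d ⬝ᵥ (Mmat d ^ n *ᵥ eLast d) = closedForm d (2 * d + n) := by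
  rw [dotProduct_mulVec, eLast, dotProduct_single, mul_one, hVec_vecMul_Mmat_pow_apply hd hn,
    Fin.val_last, show 2 * d + n - 2 * d = n by omega, sub_self, zero_add]

end matrix

theorem hVec_dotProduct_Mmat_pow_eLast {d : ℕ} (hd : 1 ≤ d) (n : ℕ) :
    hVec d ⬝ᵥ (Mmat d ^ n *ᵥ eLast d) = rootPowSum d (2 * d + n) := by
  suffices (fun n => hVec d ⬝ᵥ (Mmat d ^ n *ᵥ eLast d)) = fun n => rootPowSum d (2 * d + n) from
    congrFun this n
  refine ((twoTermRecurrence d 2 1).eq_iff_eqOn_range_order _ _ ?_ ?_).mpr fun m hm => ?_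
  · exact twoTermRecurrence_isSolution_iff.mpr fun m => by
      rw [one_mul, hVec_dotProduct_Mmat_pow_add_succ hd]
  · exact twoTermRecurrence_isSolution_iff.mpr fun m => by
      rw [one_mul, ← add_assoc, rootPowSum_add_succ, add_assoc]
  · have hm : m < d + 1 := mem_range.mp hm
    rw [hVec_dotProduct_Mmat_pow_eLast_of_le hd hm.le,
      rootPowSum_eq_closedForm d (by omega) (by omega)]

theorem rootPowSum_two_mul_add (d n : ℕ) :
    rootPowSum d (2 * d + n) = ∑ x ∈ (lambdaPoly d).roots.toFinset,
      x ^ (d + 1) / (((d : ℂ) + 1) * x - 2 * d) * x ^ n := by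
  refine sum_congr rfl fun x hx => ?_
  have hx0 : x ≠ 0 := by
    rintro rfl
    have := (mem_roots (lambdaPoly_monic d).ne_zero).mp (Multiset.mem_toFinset.mp hx)
    rcases d with _ | d <;> norm_num [IsRoot, lambdaPoly_eval] at this
  calc x ^ (2 * d + n) / (derivative (lambdaPoly d)).eval x
      = (x ^ d * (x ^ (d + 1) * x ^ n)) / (x * (derivative (lambdaPoly d)).eval x) := by
        rw [← mul_div_mul_left _ _ hx0]; ring
    _ = x ^ (d + 1) / (((d : ℂ) + 1) * x - 2 * d) * x ^ n := by
        rw [mul_eval_derivative_lambdaPoly, mul_div_mul_left _ _ (pow_ne_zero d hx0),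
          mul_div_right_comm]

theorem stmt_16 (d : ℕ) (hd : 1 ≤ d)
    (h : Fin (2 * d + 1) → ℂ)
    (hh : ∀ i : Fin (2 * d + 1),
      h i = if (i : ℕ) < d then 1 else 2 ^ ((i : ℕ) - d))
    (S : Finset ℂ)
    (hS : ∀ z : ℂ, z ∈ S ↔ z ^ (d + 1) - 2 * z ^ d - 1 = 0) :
    ∀ n : ℕ,
      dotProduct h (((Mmat d) ^ n).mulVec (eLast d)) =
        ∑ lam ∈ S, lam ^ (d + 1) / (((d : ℂ) + 1) * lam - 2 * d) * lam ^ n := by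
  intro n
  obtain rfl : S = (lambdaPoly d).roots.toFinset := by
    ext z
    rw [hS, Multiset.mem_toFinset, mem_roots (lambdaPoly_monic d).ne_zero, IsRoot, lambdaPoly_eval]
  obtain rfl : h = hVec d := funext fun i => by
    rw [hh, hVec]
    split_ifs with hi
    · rw [Nat.sub_eq_zero_of_le hi.le, pow_zero]
    · rfl
  rw [hVec_dotProduct_Mmat_pow_eLast hd, rootPowSum_two_mul_add]
end
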